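/- arXiv:2209.06534 — 7 statements merged into one kernel-verified Lean document; each statement's English description precedes it below -/
import Mathlib

section
/- There exists a joint distribution over binary variables X_a, X_b, X_c, X_d (valued in {-1,+1}) satisfying the conditional independences X_a ⫫ X_c | X_b and X_d ⫫ X_a | X_c, for which the CHSH quantity E[X_b X_d | X_a=-1,X_c=+1] + E[X_b X_d | X_a=+1,X_c=-1] + E[X_b X_d | X_a=-1,X_c=-1] - E[X_b X_d | X_a=+1,X_c=+1] attains the value 4. -/
open scoped Classical

/-- Probability of an event on a finite space with weights `p`. -/
noncomputable def prOf {Ω : Type} [Fintype Ω] (p : Ω → ℝ) (E : Ω → Prop) : ℝ :=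
  ∑ ω, if E ω then p ω else 0

/-- Conditional expectation `E[Y ∣ Xa = s, Xc = t]`. -/
noncomputable def condExp {Ω : Type} [Fintype Ω] (p : Ω → ℝ) (Xa Xc Y : Ω → ℝ)
    (s t : ℝ) : ℝ :=
  (∑ ω, if Xa ω = s ∧ Xc ω = t then p ω * Y ω else 0) /
    (∑ ω, if Xa ω = s ∧ Xc ω = t then p ω else 0)

/-- `±1`-valued coordinate of a boolean. -/
noncomputable def sgn (b : Bool) : ℝ := if b then 1 else -1

/-!
Let `Xa, Xc` be independent and uniform, let `Xb` be uniform and independent of them, and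
put `Xd = -Xb` if `Xa = Xc = +1` and `Xd = Xb` otherwise. Each of the triples
`(Xa, Xc, Xb)` and `(Xd, Xa, Xc)` is then uniform on `{±1}³`, which forces both conditional
independences, while `Xb Xd` is determined by `(Xa, Xc)`: the four conditional correlations
are `1, 1, 1, -1`.
-/

lemma sgn_true : sgn true = 1 := rfl

lemma sgn_false : sgn false = -1 := rfl

lemma sgn_injective : Function.Injective sgn := by
  intro a b
  cases a <;> cases b <;> norm_num [sgn]

section Finite

variable {Ω : Type} [Fintype Ω] (p : Ω → ℝ)

lemma prOf_congr {E F : Ω → Prop} (h : ∀ ω, E ω ↔ F ω) : prOf p E = prOf p F := by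
  simp only [prOf, h]

lemma prOf_eq_sum_prOf_and {α : Type*} [Fintype α] (E : Ω → Prop) (V : Ω → α) :
    prOf p E = ∑ v, prOf p (fun ω => E ω ∧ V ω = v) := by
  unfold prOf
  rw [Finset.sum_comm]
  refine Finset.sum_congr rfl fun ω _ => ?_
  by_cases hE : E ω <;> simp [hE]

def CondIndep {α : Type*} (X Y Z : Ω → α) : Prop :=
  ∀ x y z : α, prOf p (fun ω => X ω = x ∧ Y ω = y ∧ Z ω = z) * prOf p (fun ω => Z ω = z) =
    prOf p (fun ω => X ω = x ∧ Z ω = z) * prOf p (fun ω => Y ω = y ∧ Z ω = z)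

variable {p}

theorem CondIndep.comp_injective {α β : Type*} {X Y Z : Ω → α} (h : CondIndep p X Y Z)
    {φ : α → β} (hφ : Function.Injective φ) :
    CondIndep p (fun ω => φ (X ω)) (fun ω => φ (Y ω)) (fun ω => φ (Z ω)) := by
  intro x y z
  by_cases hx : x ∈ Set.range φ; swap
  · have hX : ∀ ω, φ (X ω) ≠ x := fun ω hω => hx ⟨_, hω⟩
    simp [prOf, hX]
  by_cases hy : y ∈ Set.range φ; swap
  · have hY : ∀ ω, φ (Y ω) ≠ y := fun ω hω => hy ⟨_, hω⟩
    simp [prOf, hY]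
  by_cases hz : z ∈ Set.range φ; swap
  · have hZ : ∀ ω, φ (Z ω) ≠ z := fun ω hω => hz ⟨_, hω⟩
    simp [prOf, hZ]
  obtain ⟨a, rfl⟩ := hx
  obtain ⟨b, rfl⟩ := hy
  obtain ⟨c, rfl⟩ := hz
  simpa only [hφ.eq_iff] using h a b c

section Uniform

variable {α : Type*} [Fintype α] {X Y Z : Ω → α} {c : ℝ}
  (hunif : ∀ x y z, prOf p (fun ω => X ω = x ∧ Y ω = y ∧ Z ω = z) = c)
include hunif

lemma prOf_fst_thd_of_uniform (x z : α) :
    prOf p (fun ω => X ω = x ∧ Z ω = z) = Fintype.card α * c :=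
  calc prOf p (fun ω => X ω = x ∧ Z ω = z)
      = ∑ y, prOf p (fun ω => X ω = x ∧ Y ω = y ∧ Z ω = z) := by
        rw [prOf_eq_sum_prOf_and p _ Y]
        exact Finset.sum_congr rfl fun y _ => prOf_congr p fun ω => by tauto
    _ = Fintype.card α * c := by simp [hunif]

lemma prOf_snd_thd_of_uniform (y z : α) :
    prOf p (fun ω => Y ω = y ∧ Z ω = z) = Fintype.card α * c :=
  calc prOf p (fun ω => Y ω = y ∧ Z ω = z)
      = ∑ x, prOf p (fun ω => X ω = x ∧ Y ω = y ∧ Z ω = z) := by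
        rw [prOf_eq_sum_prOf_and p _ X]
        exact Finset.sum_congr rfl fun x _ => prOf_congr p fun ω => by tauto
    _ = Fintype.card α * c := by simp [hunif]

lemma prOf_thd_of_uniform (z : α) :
    prOf p (fun ω => Z ω = z) = Fintype.card α ^ 2 * c :=
  calc prOf p (fun ω => Z ω = z)
      = ∑ x, prOf p (fun ω => X ω = x ∧ Z ω = z) := by
        rw [prOf_eq_sum_prOf_and p _ X]
        exact Finset.sum_congr rfl fun x _ => prOf_congr p fun ω => and_comm
    _ = Fintype.card α ^ 2 * c := by
        simp only [prOf_fst_thd_of_uniform hunif, Finset.sum_const, Finset.card_univ, nsmul_eq_mul]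
        ring

theorem condIndep_of_uniform : CondIndep p X Y Z := by
  intro x y z
  rw [hunif, prOf_thd_of_uniform hunif, prOf_fst_thd_of_uniform hunif,
    prOf_snd_thd_of_uniform hunif]
  ring

end Uniform

lemma condExp_eq_of_forall_ne_zero {Xa Xc Y : Ω → ℝ} {s t k : ℝ}
    (hpos : prOf p (fun ω => Xa ω = s ∧ Xc ω = t) ≠ 0)
    (hY : ∀ ω, p ω ≠ 0 → Xa ω = s → Xc ω = t → Y ω = k) :
    condExp p Xa Xc Y s t = k := by
  have hnum : (∑ ω, if Xa ω = s ∧ Xc ω = t then p ω * Y ω else 0) =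
      k * prOf p (fun ω => Xa ω = s ∧ Xc ω = t) := by
    rw [prOf, Finset.mul_sum]
    refine Finset.sum_congr rfl fun ω _ => ?_
    split_ifs with hω
    · by_cases hp : p ω = 0
      · simp [hp]
      · rw [hY ω hp hω.1 hω.2, mul_comm]
    · simp
  have hden : (∑ ω, if Xa ω = s ∧ Xc ω = t then p ω else 0) =
      prOf p (fun ω => Xa ω = s ∧ Xc ω = t) := by
    unfold prOf
    congr!
  rw [condExp, hnum, hden, mul_div_cancel_right₀ k hpos]

end Finite

lemma exists_sgn_eq {s : ℝ} (hs : s = -1 ∨ s = 1) : ∃ u, sgn u = s := by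
  rcases hs with rfl | rfl
  exacts [⟨false, rfl⟩, ⟨true, rfl⟩]

-- `ω = (a, b, c, d)`, read through `sgn`; `b != d` says `Xb Xd = -1`.
noncomputable def chshLaw : Bool × Bool × Bool × Bool → ℝ :=
  fun ⟨a, b, c, d⟩ => if (b != d) = (a && c) then 1 / 8 else 0

lemma chshLaw_nonneg (ω : Bool × Bool × Bool × Bool) : 0 ≤ chshLaw ω := by
  obtain ⟨a, b, c, d⟩ := ω
  dsimp only [chshLaw]
  split_ifs <;> norm_num

lemma sum_chshLaw : ∑ ω, chshLaw ω = 1 := by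
  norm_num [chshLaw, Fintype.sum_prod_type]

lemma prOf_chshLaw_acb (u v w : Bool) :
    prOf chshLaw (fun ω => ω.1 = u ∧ ω.2.2.1 = v ∧ ω.2.1 = w) = 1 / 8 := by
  cases u <;> cases v <;> cases w <;> norm_num [prOf, chshLaw, Fintype.sum_prod_type]

lemma prOf_chshLaw_dac (u v w : Bool) :
    prOf chshLaw (fun ω => ω.2.2.2 = u ∧ ω.1 = v ∧ ω.2.2.1 = w) = 1 / 8 := by
  cases u <;> cases v <;> cases w <;> norm_num [prOf, chshLaw, Fintype.sum_prod_type]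

lemma sgn_mul_sgn_of_chshLaw_ne_zero {ω : Bool × Bool × Bool × Bool} (hω : chshLaw ω ≠ 0) :
    sgn ω.2.1 * sgn ω.2.2.2 = if ω.1 && ω.2.2.1 then -1 else 1 := by
  obtain ⟨a, b, c, d⟩ := ω
  revert hω
  cases a <;> cases b <;> cases c <;> cases d <;> norm_num [chshLaw, sgn]

lemma prOf_chshLaw_sgn_pos (u w : Bool) :
    0 < prOf chshLaw (fun ω => sgn ω.1 = sgn u ∧ sgn ω.2.2.1 = sgn w) := by
  simp only [sgn_injective.eq_iff]
  rw [prOf_snd_thd_of_uniform prOf_chshLaw_dac]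
  norm_num

lemma condExp_chshLaw (u w : Bool) :
    condExp chshLaw (fun ω => sgn ω.1) (fun ω => sgn ω.2.2.1)
      (fun ω => sgn ω.2.1 * sgn ω.2.2.2) (sgn u) (sgn w) = if u && w then -1 else 1 :=
  condExp_eq_of_forall_ne_zero (prOf_chshLaw_sgn_pos u w).ne' fun _ hω ha hc => by
    rw [sgn_mul_sgn_of_chshLaw_ne_zero hω, sgn_injective ha, sgn_injective hc]

/-- There is a joint distribution on four ±1-valued variables `Xa, Xb, Xc, Xd`
satisfying `Xa ⫫ Xc ∣ Xb` and `Xd ⫫ Xa ∣ Xc` (conditional independence stated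
in product form), with all four conditioning events `{Xa = s, Xc = t}` having
positive probability, for which the CHSH quantity attains the value 4. -/
theorem chsh_value_four_attainable :
    ∃ p : Bool × Bool × Bool × Bool → ℝ,
      (∀ ω, 0 ≤ p ω) ∧ (∑ ω, p ω = 1) ∧
      -- Xa ⫫ Xc ∣ Xb
      (∀ x y z : ℝ,
        prOf p (fun ω => sgn ω.1 = x ∧ sgn ω.2.2.1 = y ∧ sgn ω.2.1 = z) *
            prOf p (fun ω => sgn ω.2.1 = z) =
          prOf p (fun ω => sgn ω.1 = x ∧ sgn ω.2.1 = z) *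
            prOf p (fun ω => sgn ω.2.2.1 = y ∧ sgn ω.2.1 = z)) ∧
      -- Xd ⫫ Xa ∣ Xc
      (∀ x y z : ℝ,
        prOf p (fun ω => sgn ω.2.2.2 = x ∧ sgn ω.1 = y ∧ sgn ω.2.2.1 = z) *
            prOf p (fun ω => sgn ω.2.2.1 = z) =
          prOf p (fun ω => sgn ω.2.2.2 = x ∧ sgn ω.2.2.1 = z) *
            prOf p (fun ω => sgn ω.1 = y ∧ sgn ω.2.2.1 = z)) ∧
      (∀ s t : ℝ, (s = -1 ∨ s = 1) → (t = -1 ∨ t = 1) →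
        0 < prOf p (fun ω => sgn ω.1 = s ∧ sgn ω.2.2.1 = t)) ∧
      condExp p (fun ω => sgn ω.1) (fun ω => sgn ω.2.2.1)
          (fun ω => sgn ω.2.1 * sgn ω.2.2.2) (-1) 1
        + condExp p (fun ω => sgn ω.1) (fun ω => sgn ω.2.2.1)
            (fun ω => sgn ω.2.1 * sgn ω.2.2.2) 1 (-1)
        + condExp p (fun ω => sgn ω.1) (fun ω => sgn ω.2.2.1)
            (fun ω => sgn ω.2.1 * sgn ω.2.2.2) (-1) (-1)
        - condExp p (fun ω => sgn ω.1) (fun ω => sgn ω.2.2.1)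
            (fun ω => sgn ω.2.1 * sgn ω.2.2.2) 1 1 = 4 := by
  refine ⟨chshLaw, chshLaw_nonneg, sum_chshLaw, ?_, ?_, ?_, ?_⟩
  · exact (condIndep_of_uniform prOf_chshLaw_acb).comp_injective sgn_injective
  · exact (condIndep_of_uniform prOf_chshLaw_dac).comp_injective sgn_injective
  · intro s t hs ht
    obtain ⟨u, rfl⟩ := exists_sgn_eq hs
    obtain ⟨w, rfl⟩ := exists_sgn_eq ht
    exact prOf_chshLaw_sgn_pos u w
  · -- `-1` has to be folded before the `1` inside it
    rw [← sgn_false, ← sgn_true, condExp_chshLaw, condExp_chshLaw, condExp_chshLaw,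
      condExp_chshLaw]
    norm_num
end

section
/- If a distribution p over random variables X_V satisfies the local Markov property for a DAG G with respect to one topological ordering, then it satisfies it with respect to every topological ordering of G. -/
/-- The predecessors of `v` in the linear order `l`. -/
def preSet {V : Type} [Fintype V] (l : LinearOrder V) (v : V) : Finset V :=
  @Finset.filter _ (fun w => l.lt w v) (fun w => l.toDecidableLT w v) Finset.univ

/-!
Fix `v` and let `≺₁` be the ordering for which the local Markov property holds. Adding to
`pre₁(v)` the vertices of a parent-closed set `T` of non-children of `v` lying above `v`, one at
a time in `≺₁`-increasing order, preserves `v ⫫ S \ pa(v) | pa(v)` for the current set `S`: the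
local Markov property at the new vertex `w` gives `w ⫫ v | S` by decomposition and weak union,
and contraction then adds `w`. Every other topological ordering `≺₂` has
`pre₂(v) ⊆ pre₁(v) ∪ T` for `T = pre₂(v) \ pre₁(v)`.
-/

section Semigraphoid

variable {V : Type} [DecidableEq V] {CI : Finset V → Finset V → Finset V → Prop}

theorem ci_of_subset_right (decomp : ∀ A B B' C, CI A (B ∪ B') C → CI A B C)
    {A B B' C : Finset V} (h : CI A B C) (hB : B' ⊆ B) : CI A B' C :=
  decomp A B' (B \ B') C (by rwa [Finset.union_sdiff_of_subset hB])

theorem ci_insert_sdiff (symm : ∀ A B C, CI A B C → CI B A C)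
    (decomp : ∀ A B B' C, CI A (B ∪ B') C → CI A B C)
    (weakUnion : ∀ A B B' C, CI A (B ∪ B') C → CI A B (C ∪ B'))
    (contraction : ∀ A B B' C, CI A B (C ∪ B') → CI A B' C → CI A (B ∪ B') C)
    {v w : V} {S P pv pw : Finset V}
    (hv : CI {v} (S \ pv) pv) (hw : CI {w} (P \ pw) pw)
    (hSP : S ⊆ P) (hvP : v ∈ P) (hvpw : v ∉ pw) (hpwS : pw ⊆ S) (hpvS : pv ⊆ S)
    (hwpv : w ∉ pv) :
    CI {v} (insert w S \ pv) pv := by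
  have hw' : CI {w} ({v} ∪ (S \ pw)) pw :=
    ci_of_subset_right decomp hw (by grind)
  have hwv : CI {w} {v} S := by
    rw [← Finset.union_sdiff_of_subset hpwS]
    exact weakUnion _ _ _ _ hw'
  have hvw : CI {v} {w} (pv ∪ (S \ pv)) := by
    rw [Finset.union_sdiff_of_subset hpvS]
    exact symm _ _ _ hwv
  rw [Finset.insert_sdiff_of_notMem _ hwpv, Finset.insert_eq]
  exact contraction _ _ _ _ hvw hv

end Semigraphoid

section Orders

variable {V : Type} [Fintype V] {pa : V → Finset V} {l : LinearOrder V} {v x : V}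

theorem mem_preSet : x ∈ preSet l v ↔ l.lt x v := by
  simp [preSet]

theorem parents_subset_preSet (htop : ∀ v w, w ∈ pa v → l.lt w v) (hx : x ∈ preSet l v) :
    pa x ⊆ preSet l v := by
  let := l
  exact fun u hu => mem_preSet.2 (lt_trans (htop x u hu) (mem_preSet.1 hx))

theorem notMem_parents_of_mem_preSet (htop : ∀ v w, w ∈ pa v → l.lt w v)
    (hx : x ∈ preSet l v) : v ∉ pa x := by
  let := l
  exact fun hv => lt_asymm (mem_preSet.1 hx) (htop x v hv)

theorem lt_of_mem_preSet_sdiff [DecidableEq V] {l' : LinearOrder V}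
    (hx : x ∈ preSet l' v \ preSet l v) : l.lt v x := by
  obtain ⟨hx', hx⟩ := Finset.mem_sdiff.1 hx
  have hxv : x ≠ v := by
    let := l'
    exact (mem_preSet.1 hx').ne
  let := l
  exact lt_of_le_of_ne (not_lt.1 (mt mem_preSet.2 hx)) hxv.symm

end Orders

theorem ci_preSet_union {V : Type} [Fintype V] [DecidableEq V] {pa : V → Finset V}
    {CI : Finset V → Finset V → Finset V → Prop}
    (symm : ∀ A B C, CI A B C → CI B A C)
    (decomp : ∀ A B B' C, CI A (B ∪ B') C → CI A B C)
    (weakUnion : ∀ A B B' C, CI A (B ∪ B') C → CI A B (C ∪ B'))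
    (contraction : ∀ A B B' C, CI A B (C ∪ B') → CI A B' C → CI A (B ∪ B') C)
    (l : LinearOrder V) (htop : ∀ v w, w ∈ pa v → l.lt w v)
    (hMarkov : ∀ v : V, CI {v} (preSet l v \ pa v) (pa v)) (v : V) (T : Finset V)
    (hT : ∀ x ∈ T, l.lt v x ∧ v ∉ pa x ∧ pa x ⊆ preSet l v ∪ T) :
    CI {v} ((preSet l v ∪ T) \ pa v) (pa v) := by
  let := l
  induction T using Finset.induction_on_max with
  | empty => simpa using hMarkov v
  | insert w T hlt ih =>
    obtain ⟨hvw, hvpw, hpw⟩ := hT w (Finset.mem_insert_self w T)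
    have hpvS : pa v ⊆ preSet l v ∪ T := fun x hx =>
      Finset.mem_union_left _ (mem_preSet.2 (htop v x hx))
    have hT' : ∀ x ∈ T, v < x ∧ v ∉ pa x ∧ pa x ⊆ preSet l v ∪ T := by
      intro x hx
      obtain ⟨h₁, h₂, h₃⟩ := hT x (Finset.mem_insert_of_mem hx)
      refine ⟨h₁, h₂, fun u hu => ?_⟩
      have hu_ne : u ≠ w := (lt_trans (htop x u hu) (hlt x hx)).ne
      grind
    rw [Finset.union_insert]
    refine ci_insert_sdiff symm decomp weakUnion contraction (ih hT') (hMarkov w) ?_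
      (mem_preSet.2 hvw) hvpw ?_ hpvS ?_
    · intro x hx
      rcases Finset.mem_union.1 hx with hx | hx
      · exact mem_preSet.2 (lt_trans (mem_preSet.1 hx) hvw)
      · exact mem_preSet.2 (hlt x hx)
    · intro u hu
      have hu_ne : u ≠ w := (htop w u hu).ne
      grind
    · exact fun hwv => lt_asymm hvw (htop v w hwv)

/-- If an abstract conditional-independence relation `CI` (satisfying the
semigraphoid axioms: symmetry, decomposition, weak union, contraction)
satisfies the local Markov property for a DAG (given by its parent sets `pa`)
with respect to one topological ordering, then it satisfies it with respect to
every topological ordering. -/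
theorem local_markov_all_topological_orderings {V : Type} [Fintype V] [DecidableEq V]
    (pa : V → Finset V)
    (CI : Finset V → Finset V → Finset V → Prop)
    (symm : ∀ A B C, CI A B C → CI B A C)
    (decomp : ∀ A B B' C, CI A (B ∪ B') C → CI A B C)
    (weakUnion : ∀ A B B' C, CI A (B ∪ B') C → CI A B (C ∪ B'))
    (contraction : ∀ A B B' C, CI A B (C ∪ B') → CI A B' C → CI A (B ∪ B') C)
    (l₁ l₂ : LinearOrder V)
    (htop₁ : ∀ v w, w ∈ pa v → l₁.lt w v)
    (htop₂ : ∀ v w, w ∈ pa v → l₂.lt w v)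
    (hMarkov : ∀ v : V, CI {v} (preSet l₁ v \ pa v) (pa v)) :
    ∀ v : V, CI {v} (preSet l₂ v \ pa v) (pa v) := by
  intro v
  set T := preSet l₂ v \ preSet l₁ v
  have hT : ∀ x ∈ T, l₁.lt v x ∧ v ∉ pa x ∧ pa x ⊆ preSet l₁ v ∪ T := by
    intro x hx
    have hx₂ := (Finset.mem_sdiff.1 hx).1
    refine ⟨lt_of_mem_preSet_sdiff hx, notMem_parents_of_mem_preSet htop₂ hx₂, ?_⟩
    rw [Finset.union_sdiff_self_eq_union]
    exact (parents_subset_preSet htop₂ hx₂).trans Finset.subset_union_right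
  have hsub : preSet l₂ v \ pa v ⊆ (preSet l₁ v ∪ T) \ pa v := by
    rw [Finset.union_sdiff_self_eq_union]
    exact Finset.sdiff_subset_sdiff Finset.subset_union_right subset_rfl
  exact ci_of_subset_right decomp
    (ci_preSet_union symm decomp weakUnion contraction l₁ htop₁ hMarkov v T hT) hsub
end

section
/- In an mDAG G, suppose a ⊥_m b | D (a and b are m-separated given D) but a ⊥̸_m b | D ∪ {s}. Then there is a valid topological ordering of the directed part of G in which s comes after a, after b, and after every element of D. -/
structure MDAG (V : Type) where
  dir : V → V → Prop
  face : Finset V → Prop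

namespace MDAG

variable {V : Type}

/-- Two vertices lie in a common bidirected face. -/
def bi (G : MDAG V) (a b : V) : Prop := a ≠ b ∧ ∃ F, G.face F ∧ a ∈ F ∧ b ∈ F

inductive EdgeKind | out | inn | bid

/-- `out` is `a → b`, `inn` is `a ← b`, `bid` is a bidirected edge. -/
def isEdge (G : MDAG V) : EdgeKind → V → V → Prop
  | .out, a, b => G.dir a b
  | .inn, a, b => G.dir b a
  | .bid, a, b => G.bi a b

/-- The edge has an arrowhead at its right endpoint. -/
def EdgeKind.headRight : EdgeKind → Prop
  | .out => True | .inn => False | .bid => True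

/-- The edge has an arrowhead at its left endpoint. -/
def EdgeKind.headLeft : EdgeKind → Prop
  | .out => False | .inn => True | .bid => True

inductive Walk (G : MDAG V) : V → V → Type
  | nil (v : V) : Walk G v v
  | cons {a b c : V} (e : EdgeKind) (h : G.isEdge e a b) (w : Walk G b c) : Walk G a c

def Walk.support {G : MDAG V} : {a b : V} → Walk G a b → List V
  | _, _, .nil v => [v]
  | _, _, @Walk.cons _ _ a _ _ _ _ w => a :: w.support

/-- A path is a walk with no repeated vertices. -/
def Walk.IsPath {G : MDAG V} {a b : V} (w : G.Walk a b) : Prop := w.support.Nodup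

/-- Auxiliary: `ph` records whether the previous edge has an arrowhead at the
current start vertex, which is internal to the overall walk. -/
def Walk.openTail {G : MDAG V} (C : Set V) : {a b : V} → Walk G a b → Prop → Prop
  | _, _, .nil _, _ => True
  | _, _, @Walk.cons _ _ m _ _ e' h' w, ph =>
      ((ph ∧ e'.headLeft) → ∃ d ∈ C, Relation.ReflTransGen G.dir m d) ∧
      (¬ (ph ∧ e'.headLeft) → m ∉ C) ∧
      Walk.openTail C w e'.headRight

/-- The walk is open (active) given conditioning set `C`: every internal
collider has a descendant in `C` and no internal non-collider lies in `C`. -/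
def Walk.openGiven {G : MDAG V} (C : Set V) : {a b : V} → Walk G a b → Prop
  | _, _, .nil _ => True
  | _, _, .cons e _ w => Walk.openTail C w e.headRight

def Walk.colliderTail {G : MDAG V} (v : V) : {a b : V} → Walk G a b → Prop → Prop
  | _, _, .nil _, _ => False
  | _, _, @Walk.cons _ _ m _ _ e' h' w, ph =>
      (v = m ∧ ph ∧ e'.headLeft) ∨ Walk.colliderTail v w e'.headRight

/-- `v` occurs as a collider on the walk. -/
def Walk.isColliderOn {G : MDAG V} (v : V) : {a b : V} → Walk G a b → Prop
  | _, _, .nil _ => False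
  | _, _, .cons e _ w => Walk.colliderTail v w e.headRight

/-- m-separation: every path from `A` to `B` is blocked by `C`. -/
def mSep (G : MDAG V) (A B C : Set V) : Prop :=
  ∀ a ∈ A, ∀ b ∈ B, ∀ w : G.Walk a b, w.IsPath → ¬ w.openGiven C

end MDAG

/-! Take a path from `a` to `b` open given `D ∪ {s}`. Since it is blocked given `D`, some collider
on it is opened by `s` alone. Hence `s` has no descendant in `D`, as `D` would open that collider
too. Nor is `a` a descendant of `s`: for the last such collider `m`, the directed path from `m` down
to `a`, walked backwards from `a` and followed by the rest of the path from `m` to `b`, would be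
open given `D`, since its new internal vertices are non-colliders descending from `m`. By symmetry
`b` is not a descendant of `s` either. So adding the edges `t → s` for `t ∈ {a, b} ∪ D` keeps the
graph acyclic, and any linear extension of the enlarged graph puts `s` after them. -/

open Relation

namespace Relation

variable {α : Type*} {r : α → α → Prop}

theorem exists_injective_lt_of_acyclic [Fintype α] (hr : ∀ v, ¬ TransGen r v v) :
    ∃ f : α → ℕ, Function.Injective f ∧ ∀ v w, r v w → f v < f w := by
  let _ : PartialOrder α :=
    { le := ReflTransGen r
      le_refl := fun _ => ReflTransGen.refl
      le_trans := fun _ _ _ => ReflTransGen.trans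
      le_antisymm := fun v w hvw hwv => by
        rcases reflTransGen_iff_eq_or_transGen.1 hvw with h | h
        · exact h.symm
        · exact (hr v (h.trans_left hwv)).elim }
  let _ : Fintype (LinearExtension α) := ‹Fintype α›
  let e := (Fintype.orderIsoFinOfCardEq (LinearExtension α) rfl).symm
  refine ⟨fun v => e (toLinearExtension v), fun v w h => e.injective (Fin.ext h), fun v w h => ?_⟩
  have hne : v ≠ w := by rintro rfl; exact hr v (TransGen.single h)
  exact e.strictMono ((toLinearExtension.monotone (ReflTransGen.single h)).lt_of_ne hne)

def addEdgesTo (r : α → α → Prop) (T : Set α) (s : α) (x y : α) : Prop :=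
  r x y ∨ x ∈ T ∧ y = s

variable {T : Set α} {s : α}

theorem transGen_of_transGen_addEdgesTo (hT : ∀ t ∈ T, ¬ ReflTransGen r s t) {y : α}
    (h : TransGen (addEdgesTo r T s) s y) : TransGen r s y := by
  induction h with
  | single h =>
    rcases h with h | ⟨ht, -⟩
    · exact TransGen.single h
    · exact (hT s ht ReflTransGen.refl).elim
  | tail _ h ih =>
    rcases h with h | ⟨ht, -⟩
    · exact ih.tail h
    · exact (hT _ ht ih.to_reflTransGen).elim

theorem transGen_addEdgesTo_cases {x y : α} (h : TransGen (addEdgesTo r T s) x y) :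
    TransGen r x y ∨
      ReflTransGen (addEdgesTo r T s) x s ∧ ReflTransGen (addEdgesTo r T s) s y := by
  induction h with
  | single h =>
    rcases h with h | ⟨ht, rfl⟩
    · exact .inl (TransGen.single h)
    · exact .inr ⟨ReflTransGen.single (.inr ⟨ht, rfl⟩), ReflTransGen.refl⟩
  | tail hxp h ih =>
    rcases h with h | ⟨ht, rfl⟩
    · exact ih.imp (·.tail h) fun ⟨hxs, hsp⟩ => ⟨hxs, hsp.tail (.inl h)⟩
    · exact .inr ⟨(hxp.tail (.inr ⟨ht, rfl⟩)).to_reflTransGen, ReflTransGen.refl⟩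

/-- A cycle either avoids the new edges or passes through `s`, and no new edge can be reached
from `s`. -/
theorem acyclic_addEdgesTo (hr : ∀ v, ¬ TransGen r v v) (hT : ∀ t ∈ T, ¬ ReflTransGen r s t)
    (v : α) : ¬ TransGen (addEdgesTo r T s) v v := fun h =>
  (transGen_addEdgesTo_cases h).elim (hr v) fun ⟨hvs, hsv⟩ =>
    hr s (transGen_of_transGen_addEdgesTo hT ((TransGen.trans_right hsv h).trans_left hvs))

theorem exists_injective_lt_of_acyclic_with_last [Fintype α]
    (hr : ∀ v, ¬ TransGen r v v) (hT : ∀ t ∈ T, ¬ ReflTransGen r s t) :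
    ∃ f : α → ℕ, Function.Injective f ∧ (∀ v w, r v w → f v < f w) ∧ ∀ t ∈ T, f t < f s :=
  let ⟨f, hf, hlt⟩ := exists_injective_lt_of_acyclic (acyclic_addEdgesTo hr hT)
  ⟨f, hf, fun v w h => hlt v w (.inl h), fun t ht => hlt t s (.inr ⟨ht, rfl⟩)⟩

end Relation

namespace MDAG

variable {V : Type} {G : MDAG V}

theorem bi_symm {a b : V} (h : G.bi a b) : G.bi b a :=
  ⟨h.1.symm, h.2.imp fun _ hF => ⟨hF.1, hF.2.2, hF.2.1⟩⟩

def EdgeKind.flip : EdgeKind → EdgeKind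
  | .out => .inn | .inn => .out | .bid => .bid

@[simp] theorem EdgeKind.headLeft_flip (e : EdgeKind) : e.flip.headLeft = e.headRight := by
  cases e <;> rfl

@[simp] theorem EdgeKind.headRight_flip (e : EdgeKind) : e.flip.headRight = e.headLeft := by
  cases e <;> rfl

theorem isEdge_flip {e : EdgeKind} {a b : V} (h : G.isEdge e a b) : G.isEdge e.flip b a := by
  cases e with
  | out => exact h
  | inn => exact h
  | bid => exact bi_symm h

def openAt (G : MDAG V) (C : Set V) (m : V) (collider : Prop) : Prop :=
  (collider → ∃ d ∈ C, ReflTransGen G.dir m d) ∧ (¬ collider → m ∉ C)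

namespace Walk

variable {C : Set V}

@[simp] theorem support_cons {a m b : V} (e : EdgeKind) (h : G.isEdge e a m) (w : G.Walk m b) :
    (cons e h w).support = a :: w.support := rfl

@[simp] theorem openTail_nil (v : V) (ph : Prop) : openTail C (nil v : G.Walk v v) ph := trivial

theorem openTail_cons {a m b : V} (e : EdgeKind) (h : G.isEdge e a m) (w : G.Walk m b)
    (ph : Prop) :
    openTail C (cons e h w) ph ↔ G.openAt C a (ph ∧ e.headLeft) ∧ openTail C w e.headRight :=
  and_assoc.symm

theorem openGiven_of_openTail_false {a b : V} (w : G.Walk a b) (h : openTail C w False) :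
    openGiven C w := by
  cases w with
  | nil => trivial
  | cons => exact h.2.2

def snoc : {a b : V} → G.Walk a b → {c : V} → (e : EdgeKind) → G.isEdge e b c → G.Walk a c
  | _, _, nil _, _, e, h => cons e h (nil _)
  | _, _, cons e' h' w, _, e, h => cons e' h' (w.snoc e h)

def reverse : {a b : V} → G.Walk a b → G.Walk b a
  | _, _, nil v => nil v
  | _, _, cons e h w => w.reverse.snoc e.flip (isEdge_flip h)

@[simp] theorem support_snoc {a b c : V} (w : G.Walk a b) (e : EdgeKind) (h : G.isEdge e b c) :
    (w.snoc e h).support = w.support ++ [c] := by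
  induction w with
  | nil => rfl
  | cons e' h' w ih => simp [snoc, ih]

@[simp] theorem support_reverse {a b : V} (w : G.Walk a b) :
    w.reverse.support = w.support.reverse := by
  induction w with
  | nil => rfl
  | cons e h w ih => simp [reverse, ih]

theorem IsPath.reverse {a b : V} {w : G.Walk a b} (hw : w.IsPath) : w.reverse.IsPath := by
  simpa [IsPath] using hw

theorem openTail_snoc_snoc {a b c d : V} (w : G.Walk a b) (e₁ : EdgeKind) (h₁ : G.isEdge e₁ b c)
    (e₂ : EdgeKind) (h₂ : G.isEdge e₂ c d) (ph : Prop) :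
    openTail C ((w.snoc e₁ h₁).snoc e₂ h₂) ph ↔
      openTail C (w.snoc e₁ h₁) ph ∧ G.openAt C c (e₁.headRight ∧ e₂.headLeft) := by
  induction w generalizing ph with
  | nil => simp [snoc, openTail_cons]
  | cons e h w ih => simp only [snoc, openTail_cons, ih, and_assoc]

theorem openGiven_snoc_snoc {a b c d : V} (w : G.Walk a b) (e₁ : EdgeKind) (h₁ : G.isEdge e₁ b c)
    (e₂ : EdgeKind) (h₂ : G.isEdge e₂ c d) :
    openGiven C ((w.snoc e₁ h₁).snoc e₂ h₂) ↔
      openGiven C (w.snoc e₁ h₁) ∧ G.openAt C c (e₁.headRight ∧ e₂.headLeft) := by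
  cases w with
  | nil => simp [snoc, openGiven, openTail_cons]
  | cons e h w => exact openTail_snoc_snoc w e₁ h₁ e₂ h₂ _

theorem openGiven_reverse : {a b : V} → (w : G.Walk a b) → (openGiven C w.reverse ↔ openGiven C w)
  | _, _, nil _ => Iff.rfl
  | _, _, cons _ _ (nil _) => Iff.rfl
  | _, _, cons e h (cons e₂ h₂ w) => by
    have ih := openGiven_reverse (cons e₂ h₂ w)
    simp only [reverse] at ih ⊢
    rw [openGiven_snoc_snoc, ih]
    simp only [openGiven, openTail_cons, EdgeKind.headLeft_flip, EdgeKind.headRight_flip,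
      and_comm]

theorem openTail_of_union_singleton {D : Set V} {s d : V} (hd : d ∈ D)
    (hsd : ReflTransGen G.dir s d) {a b : V} (w : G.Walk a b) (ph : Prop)
    (hw : openTail (D ∪ {s}) w ph) : openTail D w ph := by
  induction w generalizing ph with
  | nil => trivial
  | cons e h w ih =>
    obtain ⟨hcol, hnon, hrest⟩ := hw
    refine ⟨fun hc => ?_, fun hn hm => hnon hn (.inl hm), ih _ hrest⟩
    obtain ⟨u, hu | rfl, hmu⟩ := hcol hc
    · exact ⟨u, hu, hmu⟩
    · exact ⟨d, hd, hmu.trans hsd⟩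

theorem openGiven_of_union_singleton {D : Set V} {s d : V} (hd : d ∈ D)
    (hsd : ReflTransGen G.dir s d) {a b : V} (w : G.Walk a b)
    (hw : openGiven (D ∪ {s}) w) : openGiven D w := by
  cases w with
  | nil => trivial
  | cons e h w => exact openTail_of_union_singleton hd hsd w _ hw

theorem exists_suffix_openTail {a b : V} (w : G.Walk a b) (ph : Prop) (hw : openTail C w ph)
    {x : V} (hx : x ∈ w.support) (hxC : x ∉ C) :
    ∃ w' : G.Walk x b, w'.support <:+ w.support ∧ openTail C w' False := by
  induction w generalizing ph with
  | nil =>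
    obtain rfl := List.mem_singleton.1 hx
    exact ⟨nil x, List.suffix_refl _, trivial⟩
  | cons e h w ih =>
    rcases List.mem_cons.1 hx with rfl | hx
    · exact ⟨cons e h w, List.suffix_refl _, fun hc => hc.1.elim, fun _ => hxC, hw.2.2⟩
    · obtain ⟨w', hsuf, hw'⟩ := ih _ hw.2.2 hx
      exact ⟨w', hsuf.trans (List.suffix_cons _ _), hw'⟩

theorem exists_last_blocked_collider {D : Set V} {s a b : V} (w : G.Walk a b) (ph : Prop)
    (hs : openTail (D ∪ {s}) w ph) (hD : ¬ openTail D w ph) :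
    ∃ (m : V) (w' : G.Walk m b), w'.support <:+ w.support ∧ ReflTransGen G.dir m s ∧
      (∀ u, ReflTransGen G.dir m u → u ∉ D) ∧ openTail D w' False := by
  induction w generalizing ph with
  | nil => exact (hD trivial).elim
  | @cons m _ _ e h w ih =>
    obtain ⟨hcol, hnon, hrest⟩ := hs
    by_cases hrestD : openTail D w e.headRight
    · have hnonD : ¬ (ph ∧ e.headLeft) → m ∉ D := fun hn hm => hnon hn (.inl hm)
      have hc : ph ∧ e.headLeft := by
        by_contra hc
        exact hD ⟨fun h => (hc h).elim, hnonD, hrestD⟩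
      have hmD : ∀ u, ReflTransGen G.dir m u → u ∉ D := fun u hmu hu =>
        hD ⟨fun _ => ⟨u, hu, hmu⟩, hnonD, hrestD⟩
      obtain ⟨u, hu | rfl, hmu⟩ := hcol hc
      · exact (hmD u hmu hu).elim
      · exact ⟨m, cons e h w, List.suffix_refl _, hmu, hmD, fun hf => hf.1.elim,
          fun _ => hmD m .refl, hrestD⟩
    · obtain ⟨m', w', hsuf, hrest'⟩ := ih _ hrest hrestD
      exact ⟨m', w', hsuf.trans (List.suffix_cons _ _), hrest'⟩

theorem exists_isPath_openTail_of_reflTransGen (hacyclic : ∀ v, ¬ TransGen G.dir v v)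
    {D : Set V} {m b : V} {w : G.Walk m b} (hw : w.IsPath)
    (hD : ∀ u, ReflTransGen G.dir m u → u ∉ D) (hop : openTail D w False) {x : V}
    (hmx : ReflTransGen G.dir m x) : ∃ W : G.Walk x b, W.IsPath ∧ openTail D W False := by
  suffices ∃ W : G.Walk x b, W.IsPath ∧
      (∀ v ∈ W.support, v ∈ w.support ∨ ReflTransGen G.dir v x) ∧ openTail D W False from
    let ⟨W, hW, _, hWop⟩ := this
    ⟨W, hW, hWop⟩
  induction hmx with
  | refl => exact ⟨w, hw, fun v hv => .inl hv, hop⟩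
  | @tail p x hmp hpx ih =>
    by_cases hxw : x ∈ w.support
    · obtain ⟨W, hsuf, hW⟩ := exists_suffix_openTail w False hop hxw (hD x (hmp.tail hpx))
      exact ⟨W, List.Nodup.sublist hsuf.sublist hw, fun v hv => .inl (hsuf.subset hv), hW⟩
    · obtain ⟨W, hW, hinv, hWop⟩ := ih
      have hxW : x ∉ W.support := fun hx =>
        (hinv x hx).elim hxw fun hxp => hacyclic x (TransGen.tail' hxp hpx)
      refine ⟨cons .inn hpx W, List.nodup_cons.2 ⟨hxW, hW⟩, ?_, fun hf => hf.1.elim,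
        fun _ => hD x (hmp.tail hpx), hWop⟩
      intro v hv
      rcases List.mem_cons.1 hv with rfl | hv
      · exact .inr .refl
      · exact (hinv v hv).imp_right (·.tail hpx)

end Walk

open Walk

theorem mSep_singleton_iff {a b : V} {C : Set V} :
    G.mSep {a} {b} C ↔ ∀ w : G.Walk a b, w.IsPath → ¬ w.openGiven C := by
  simp [mSep]

theorem mSep.symm {A B C : Set V} (h : G.mSep A B C) : G.mSep B A C :=
  fun b hb a ha w hw hop => h a ha b hb w.reverse hw.reverse ((openGiven_reverse w).2 hop)

theorem not_reflTransGen_mem_of_mSep {D : Set V} {a b s d : V} (hsep : G.mSep {a} {b} D)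
    {w : G.Walk a b} (hw : w.IsPath) (hopen : w.openGiven (D ∪ {s})) (hd : d ∈ D) :
    ¬ ReflTransGen G.dir s d := fun hsd =>
  mSep_singleton_iff.1 hsep w hw (openGiven_of_union_singleton hd hsd w hopen)

theorem not_reflTransGen_start_of_mSep (hacyclic : ∀ v, ¬ TransGen G.dir v v) {D : Set V}
    {a b s : V} (hsep : G.mSep {a} {b} D) {w : G.Walk a b} (hw : w.IsPath)
    (hopen : w.openGiven (D ∪ {s})) : ¬ ReflTransGen G.dir s a := by
  intro hsa
  rw [mSep_singleton_iff] at hsep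
  cases w with
  | nil => exact hsep _ hw trivial
  | cons e h w =>
    obtain ⟨m, w', hsuf, hms, hmD, hw'⟩ := exists_last_blocked_collider w _ hopen (hsep _ hw)
    have hw'path : w'.IsPath := List.Nodup.sublist hsuf.sublist (List.nodup_cons.1 hw).2
    obtain ⟨W, hW, hWop⟩ :=
      exists_isPath_openTail_of_reflTransGen hacyclic hw'path hmD hw' (hms.trans hsa)
    exact hsep W hW (openGiven_of_openTail_false W hWop)

theorem not_reflTransGen_end_of_mSep (hacyclic : ∀ v, ¬ TransGen G.dir v v) {D : Set V}
    {a b s : V} (hsep : G.mSep {a} {b} D) {w : G.Walk a b} (hw : w.IsPath)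
    (hopen : w.openGiven (D ∪ {s})) : ¬ ReflTransGen G.dir s b :=
  not_reflTransGen_start_of_mSep hacyclic hsep.symm hw.reverse ((openGiven_reverse w).2 hopen)

end MDAG

open MDAG Relation in
theorem topological_order_with_s_last_general {V : Type} [Fintype V] (G : MDAG V)
    (hacyclic : ∀ v : V, ¬ Relation.TransGen G.dir v v)
    (a b s : V) (D : Set V)
    (hsep : G.mSep {a} {b} D)
    (hnsep : ¬ G.mSep {a} {b} (D ∪ {s})) :
    ∃ f : V → ℕ, Function.Injective f ∧ (∀ v w, G.dir v w → f v < f w) ∧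
      f a < f s ∧ f b < f s ∧ ∀ d ∈ D, f d < f s := by
  obtain ⟨w, hw, hopen⟩ : ∃ w : G.Walk a b, w.IsPath ∧ w.openGiven (D ∪ {s}) := by
    simpa [mSep_singleton_iff] using hnsep
  have hT : ∀ t ∈ insert a (insert b D), ¬ ReflTransGen G.dir s t := by
    rintro t (rfl | rfl | ht)
    · exact not_reflTransGen_start_of_mSep hacyclic hsep hw hopen
    · exact not_reflTransGen_end_of_mSep hacyclic hsep hw hopen
    · exact not_reflTransGen_mem_of_mSep hsep hw hopen ht
  obtain ⟨f, hf, hdir, hlast⟩ := exists_injective_lt_of_acyclic_with_last hacyclic hT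
  exact ⟨f, hf, hdir, hlast a (.inl rfl), hlast b (.inr (.inl rfl)),
    fun d hd => hlast d (.inr (.inr hd))⟩

open MDAG Relation in
/-- Lemma: in an mDAG (a DAG with a collection of bidirected faces), if
`a ⊥ₘ b ∣ D` but not `a ⊥ₘ b ∣ D ∪ {s}`, then there is a valid topological
ordering of the directed part in which `s` comes after `a`, `b`, and every
element of `D`. -/
theorem topological_order_with_s_last {V : Type} [Fintype V] (G : MDAG V)
    (hacyclic : ∀ v : V, ¬ Relation.TransGen G.dir v v)
    (a b s : V) (D : Set V)
    (haD : a ∉ D) (hbD : b ∉ D) (hsD : s ∉ D)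
    (hsa : s ≠ a) (hsb : s ≠ b) (hab : a ≠ b)
    (hsep : G.mSep {a} {b} D)
    (hnsep : ¬ G.mSep {a} {b} (D ∪ {s})) :
    ∃ f : V → ℕ, Function.Injective f ∧ (∀ v w, G.dir v w → f v < f w) ∧
      f a < f s ∧ f b < f s ∧ ∀ d ∈ D, f d < f s :=
  topological_order_with_s_last_general G hacyclic a b s D hsep hnsep
end

section
/- In a DAG, if a and b are d-separated given D but become d-connected given D ∪ {s}, then there exists a path from a to b containing a collider c such that s is a descendant of c and no element of D is a descendant of c... in particular s has a descendant-free relationship to D on that path; consequently, s is not an ancestor of any element of D along the opened path's colliders. -/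
open MDAG Relation in
/-- The DAG `H` viewed as an mDAG with no bidirected faces. -/
def toMDAG {V : Type} (H : V → V → Prop) : MDAG V := ⟨H, fun _ => False⟩

/-- d-separation in a DAG `H`. -/
def dSep {V : Type} (H : V → V → Prop) (A B C : Set V) : Prop :=
  (toMDAG H).mSep A B C

/-!
A path open given `D ∪ {s}` but blocked given `D` must fail, given `D`, at some vertex.
Non-colliders avoid `D ∪ {s}`, hence `D`, so that vertex is a collider with a descendant in
`D ∪ {s}` but none in `D`; its descendant in `D ∪ {s}` is therefore `s`.
-/

namespace MDAG.Walk

variable {V : Type} {G : MDAG V} {D : Set V} {s : V}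

lemma exists_colliderTail_of_openTail_union {a b : V} (w : G.Walk a b) {ph : Prop}
    (hopen : w.openTail (D ∪ {s}) ph) (hblocked : ¬ w.openTail D ph) :
    ∃ c, w.colliderTail c ph ∧ Relation.ReflTransGen G.dir c s ∧
      ∀ d ∈ D, ¬ Relation.ReflTransGen G.dir c d := by
  induction w generalizing ph with
  | nil _ => exact absurd trivial hblocked
  | @cons x _ _ e h w ih =>
    obtain ⟨hcollider, hnoncollider, htail⟩ := hopen
    have of_blocked_tail (hx : (ph ∧ e.headLeft) → ∃ d ∈ D, Relation.ReflTransGen G.dir x d)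
        (hx' : ¬ (ph ∧ e.headLeft) → x ∉ D) :
        ∃ c, (cons e h w).colliderTail c ph ∧ Relation.ReflTransGen G.dir c s ∧
          ∀ d ∈ D, ¬ Relation.ReflTransGen G.dir c d := by
      obtain ⟨c, hc, hcs, hcD⟩ := ih htail fun ht => hblocked ⟨hx, hx', ht⟩
      exact ⟨c, Or.inr hc, hcs, hcD⟩
    by_cases hx : ph ∧ e.headLeft
    · by_cases hxD : ∃ d ∈ D, Relation.ReflTransGen G.dir x d
      · exact of_blocked_tail (fun _ => hxD) (absurd hx)
      · push Not at hxD
        obtain ⟨d, hd | rfl, hxd⟩ := hcollider hx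
        · exact absurd hxd (hxD d hd)
        · exact ⟨x, Or.inl ⟨rfl, hx⟩, hxd, hxD⟩
    · exact of_blocked_tail (absurd · hx) fun _ hxD => hnoncollider hx (Or.inl hxD)

lemma exists_collider_of_openGiven_union {a b : V} (w : G.Walk a b)
    (hopen : w.openGiven (D ∪ {s})) (hblocked : ¬ w.openGiven D) :
    ∃ c, w.isColliderOn c ∧ Relation.ReflTransGen G.dir c s ∧
      ∀ d ∈ D, ¬ Relation.ReflTransGen G.dir c d := by
  cases w with
  | nil _ => exact absurd trivial hblocked
  | cons _ _ w => exact exists_colliderTail_of_openTail_union w hopen hblocked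

end MDAG.Walk

theorem opened_path_has_collider_to_s_general {V : Type} (H : V → V → Prop)
    (a b s : V) (D : Set V)
    (hsep : dSep H {a} {b} D)
    (hnsep : ¬ dSep H {a} {b} (D ∪ {s})) :
    ∃ w : (toMDAG H).Walk a b, w.IsPath ∧ w.openGiven (D ∪ {s}) ∧
      ∃ c : V, w.isColliderOn c ∧ Relation.ReflTransGen H c s ∧
        ∀ d ∈ D, ¬ Relation.ReflTransGen H c d := by
  simp only [dSep, MDAG.mSep, Set.mem_singleton_iff, forall_eq, not_forall, not_not] at hsep hnsep
  obtain ⟨w, hpath, hopen⟩ := hnsep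
  exact ⟨w, hpath, hopen, w.exists_collider_of_openGiven_union hopen (hsep w hpath)⟩

/-- In a DAG, if `a ⊥_d b ∣ D` but `a` and `b` are d-connected given
`D ∪ {s}`, then some path from `a` to `b` that is open given `D ∪ {s}` has a
collider `c` with `s` among its descendants but no element of `D` among its
descendants. -/
theorem opened_path_has_collider_to_s {V : Type} [Fintype V] (H : V → V → Prop)
    (hacyclic : ∀ x : V, ¬ Relation.TransGen H x x)
    (a b s : V) (D : Set V)
    (hsep : dSep H {a} {b} D)
    (hnsep : ¬ dSep H {a} {b} (D ∪ {s})) :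
    ∃ w : (toMDAG H).Walk a b, w.IsPath ∧ w.openGiven (D ∪ {s}) ∧
      ∃ c : V, w.isColliderOn c ∧ Relation.ReflTransGen H c s ∧
        ∀ d ∈ D, ¬ Relation.ReflTransGen H c d :=
  opened_path_has_collider_to_s_general H a b s D hsep hnsep
end

section
/- In an mDAG whose directed part is acyclic, every district contains at least one fixable vertex, where a vertex v is fixable if dec(v) ∩ dis(v) = {v}. -/
section

open Relation

theorem exists_mem_forall_not_transGen {α : Type*} [Finite α] {r : α → α → Prop}
    (hr : ∀ x, ¬ TransGen r x x) {s : Set α} (hs : s.Nonempty) :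
    ∃ w ∈ s, ∀ u ∈ s, ¬ TransGen r w u := by
  have : IsStrictOrder α (flip (TransGen r)) :=
    { irrefl := hr, trans := fun _ _ _ hab hbc => TransGen.trans hbc hab }
  exact (Finite.wellFounded_of_trans_of_irrefl (flip (TransGen r))).has_min s hs

end

open MDAG Relation in
/-- In an mDAG with acyclic directed part, every district contains a fixable
vertex: some `w` in the district of `v` whose only strict descendants lie
outside its district, i.e. `dec(w) ∩ dis(w) = {w}`. -/
theorem district_has_fixable_vertex {V : Type} [Fintype V] (G : MDAG V)
    (hacyclic : ∀ x : V, ¬ Relation.TransGen G.dir x x) (v : V) :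
    ∃ w : V, Relation.ReflTransGen G.bi v w ∧
      ∀ u : V, Relation.ReflTransGen G.dir w u →
        Relation.ReflTransGen G.bi w u → u = w := by
  obtain ⟨w, hvw, hw⟩ :=
    exists_mem_forall_not_transGen hacyclic (s := {w | ReflTransGen G.bi v w}) ⟨v, .refl⟩
  refine ⟨w, hvw, fun u hwu_dir hwu_bi => ?_⟩
  rcases reflTransGen_iff_eq_or_transGen.mp hwu_dir with rfl | hstrict
  · rfl
  · exact absurd hstrict (hw u (hvw.trans hwu_bi))
end

section
/- For discrete random variables: if q(x_V) = (r(x_v)/p(x_v | x_M)) · p(x_V) where M ⊆ V\{v}, p is strictly positive, and r is a strictly positive pmf on the states of v, then, provided p(x_v | x_{V\{v}}) = p(x_v | x_M) for all x (i.e., X_v ⫫ X_{V\(M∪{v})} | X_M under p), X_v is independent of X_M under q with marginal distribution r for X_v. -/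
/-- Fixing with Markov blanket `M`: let `p` be a strictly positive joint pmf
over `X_v` (states `A`), `X_M` (states `M`) and the remaining variables
(states `N`), satisfying the Markov blanket condition
`p(x_v ∣ x_{V∖{v}}) = p(x_v ∣ x_M)`.  For a strictly positive pmf `r` on the
states of `v`, define `q = (r(x_v) / p(x_v ∣ x_M)) · p`.  Then `q` is a pmf,
the `q`-marginal of `X_v` is `r`, and under `q` the variables `X_v` and `X_M`
are independent. -/
theorem fixing_markov_blanket {A M N : Type} [Fintype A] [Fintype M] [Fintype N]
    (p : A × M × N → ℝ) (hp : ∀ z, 0 < p z) (hpsum : ∑ z, p z = 1)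
    (r : A → ℝ) (hr : ∀ a, 0 < r a) (hrsum : ∑ a, r a = 1)
    (hmb : ∀ (a : A) (m : M) (n : N),
      p (a, m, n) / (∑ a', p (a', m, n)) =
        (∑ n', p (a, m, n')) / (∑ a', ∑ n', p (a', m, n')))
    (q : A × M × N → ℝ)
    (hq : ∀ (a : A) (m : M) (n : N),
      q (a, m, n) =
        r a / ((∑ n', p (a, m, n')) / (∑ a', ∑ n', p (a', m, n'))) * p (a, m, n)) :
    (∑ z, q z = 1) ∧ (∀ a : A, ∑ m, ∑ n, q (a, m, n) = r a) ∧
      ∀ (a : A) (m : M),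
        (∑ n, q (a, m, n)) = r a * (∑ a', ∑ n, q (a', m, n)) := by
  have hne : Nonempty (A × M × N) := by
    by_contra h
    rw [not_nonempty_iff] at h
    simp [Finset.univ_eq_empty] at hpsum
  have hA : Nonempty A := ⟨hne.some.1⟩
  have hM : Nonempty M := ⟨hne.some.2.1⟩
  have hN : Nonempty N := ⟨hne.some.2.2⟩
  have hT : ∀ m n, 0 < ∑ a', p (a', m, n) := fun m n =>
    Finset.sum_pos (fun a _ => hp _) Finset.univ_nonempty
  have hP : ∀ a m, 0 < ∑ n', p (a, m, n') := fun a m =>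
    Finset.sum_pos (fun n _ => hp _) Finset.univ_nonempty
  have hS : ∀ m, 0 < ∑ a', ∑ n', p (a', m, n') := fun m =>
    Finset.sum_pos (fun a _ => hP a m) Finset.univ_nonempty
  -- key: q (a,m,n) = r a * ∑ a', p (a',m,n)
  have hkey : ∀ a m n, q (a, m, n) = r a * ∑ a', p (a', m, n) := by
    intro a m n
    rw [hq a m n]
    have h := hmb a m n
    have hT' := (hT m n).ne'
    have hP' := (hP a m).ne'
    have hS' := (hS m).ne'
    field_simp at h ⊢
    nlinarith [h, hp (a, m, n), hT m n, hP a m, hS m, hr a]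
  -- sum over n of q
  have hsumn : ∀ a m, (∑ n, q (a, m, n)) = r a * ∑ a', ∑ n', p (a', m, n') := by
    intro a m
    rw [Finset.sum_comm]
    simp only [hkey]
    rw [← Finset.mul_sum, Finset.sum_comm]
  refine ⟨?_, ?_, ?_⟩
  · rw [Fintype.sum_prod_type]
    have : ∀ a : A, ∑ mn : M × N, q (a, mn.1, mn.2) = r a := by
      intro a
      rw [Fintype.sum_prod_type]
      simp only [hsumn]
      rw [← Finset.mul_sum]
      have : (∑ m, ∑ a', ∑ n', p (a', m, n')) = 1 := by
        rw [Finset.sum_comm]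
        rw [Fintype.sum_prod_type] at hpsum
        simpa [Fintype.sum_prod_type] using hpsum
      rw [this, mul_one]
    simp only [this, hrsum]
  · intro a
    simp only [hsumn]
    rw [← Finset.mul_sum]
    have : (∑ m, ∑ a', ∑ n', p (a', m, n')) = 1 := by
      rw [Finset.sum_comm]
      rw [Fintype.sum_prod_type] at hpsum
      simpa [Fintype.sum_prod_type] using hpsum
    rw [this, mul_one]
  · intro a m
    simp only [hsumn, ← Finset.sum_mul]
    rw [show (∑ a', r a') = 1 from hrsum]
    ring
end

section
/- Latent projection preserves directed reachability among retained vertices: if G is an mDAG (or DAG) with vertex set V ∪ L (disjoint), and G' is its latent projection onto V, then for a, b ∈ V, there is a directed path from a to b in G' if and only if there is a directed path from a to b in G. -/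
/-!
Every projected edge unfolds to a walk of `G`, which gives one direction. Conversely, a walk of
`G` from `a` to `b` is cut at its observed vertices: each segment between consecutive observed
vertices has only latent interior, hence is an edge of the projection.
-/

open Relation

variable {V L : Type*} {dir : V ⊕ L → V ⊕ L → Prop}

def LatentWalk (dir : V ⊕ L → V ⊕ L → Prop) (u : V ⊕ L) (b : V) : Prop :=
  ∃ l : List L, List.IsChain dir (u :: (l.map Sum.inr ++ [Sum.inl b]))

def latentProjection (dir : V ⊕ L → V ⊕ L → Prop) (a b : V) : Prop :=
  LatentWalk dir (Sum.inl a) b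

namespace LatentWalk

theorem of_rel {u : V ⊕ L} {b : V} (h : dir u (Sum.inl b)) : LatentWalk dir u b :=
  ⟨[], List.isChain_pair.2 h⟩

theorem cons {u : V ⊕ L} {x : L} {b : V} (h : dir u (Sum.inr x))
    (hw : LatentWalk dir (Sum.inr x) b) : LatentWalk dir u b :=
  let ⟨l, hl⟩ := hw
  ⟨x :: l, hl.cons_cons h⟩

theorem reflTransGen {u : V ⊕ L} {b : V} (hw : LatentWalk dir u b) :
    ReflTransGen dir u (Sum.inl b) :=
  let ⟨l, hl⟩ := hw
  List.relationReflTransGen_of_exists_isChain_cons _ hl (by simp)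

end LatentWalk

theorem reflTransGen_of_reflTransGen_latentProjection {a b : V}
    (h : ReflTransGen (latentProjection dir) a b) : ReflTransGen dir (Sum.inl a) (Sum.inl b) :=
  h.lift' Sum.inl fun _ _ hw => LatentWalk.reflTransGen hw

theorem eq_or_exists_latentWalk_of_reflTransGen {u : V ⊕ L} {b : V}
    (h : ReflTransGen dir u (Sum.inl b)) :
    u = Sum.inl b ∨ ∃ c, LatentWalk dir u c ∧ ReflTransGen (latentProjection dir) c b := by
  induction h using ReflTransGen.head_induction_on with
  | refl => exact Or.inl rfl
  | @head u w huw _ ih =>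
    right
    rcases ih with rfl | ⟨c, hwc, hcb⟩
    · exact ⟨b, .of_rel huw, .refl⟩
    · cases w with
      | inl w => exact ⟨w, .of_rel huw, .head hwc hcb⟩
      | inr x => exact ⟨c, .cons huw hwc, hcb⟩

theorem reflTransGen_latentProjection_iff {a b : V} :
    ReflTransGen (latentProjection dir) a b ↔ ReflTransGen dir (Sum.inl a) (Sum.inl b) := by
  refine ⟨reflTransGen_of_reflTransGen_latentProjection, fun h => ?_⟩
  rcases eq_or_exists_latentWalk_of_reflTransGen h with hab | ⟨c, hac, hcb⟩
  · rw [Sum.inl_injective hab]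
  · exact .head hac hcb

/-- Latent projection preserves directed reachability among retained vertices:
if `G'` (on observed vertices `V`) is the latent projection of a directed
graph `G` on `V ⊕ L` — i.e. `a → b` in `G'` iff there is a directed walk from
`a` to `b` in `G` whose internal vertices all lie in `L` — then for `a, b ∈ V`
there is a directed path from `a` to `b` in `G'` iff there is one in `G`. -/
theorem latent_projection_preserves_reachability {V L : Type}
    (dir : V ⊕ L → V ⊕ L → Prop) (dir' : V → V → Prop)
    (hproj : ∀ a b : V, dir' a b ↔
      ∃ l : List L, List.Chain dir (Sum.inl a) (l.map Sum.inr ++ [Sum.inl b])) :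
    ∀ a b : V, Relation.ReflTransGen dir' a b ↔
      Relation.ReflTransGen dir (Sum.inl a) (Sum.inl b) := by
  have hdir' : dir' = latentProjection dir := funext₂ fun a b => propext (hproj a b)
  subst hdir'
  exact fun _ _ => reflTransGen_latentProjection_iff
end
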